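/- Define the total output SIR by SIR_tot(Γ) = q(d₀, Γ) / Σ_{j=1}^N q(d_j, Γ), and assume in addition that σ₀²‖h₀‖² > (1/N)·Σ_{l=1}^N σ_l²τ_l‖h_l‖². Define g_R(v) = SIR_tot(Γ_R(v)) and g_E(v) = SIR_tot(Γ_E(v)) for v > 0. Then g_R and g_E are differentiable on (0,∞) and for every v > 0 one has g_R′(v) < g_E′(v) < 0. -/

import Mathlib

open Matrix Finset Filter Topology

noncomputable section

/-- squared Euclidean norm of a complex vector. -/
def nsq {M : ℕ} (x : Fin M → ℂ) : ℝ := ∑ i, Complex.normSq (x i)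

/-- outer product `x x*`. -/
def outerP {M : ℕ} (x : Fin M → ℂ) : Matrix (Fin M) (Fin M) ℂ :=
  Matrix.vecMulVec x (star x)

/-- the (real) quadratic form `d* A d`. -/
def quadForm {M : ℕ} (d : Fin M → ℂ) (A : Matrix (Fin M) (Fin M) ℂ) : ℝ :=
  (star d ⬝ᵥ (A *ᵥ d)).re

/-- `Γ(c, v) = σ₀² h₀h₀* + ∑ l, c_l h_l h_l* + v I`.  Index `0` is the desired source and
index `l.succ` is the `l`-th interference. -/
def Gam {M N : ℕ} (h : Fin (N + 1) → Fin M → ℂ) (σ0sq : ℝ) (c : Fin N → ℝ) (v : ℝ) :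
    Matrix (Fin M) (Fin M) ℂ :=
  σ0sq • outerP (h 0) + ∑ l : Fin N, c l • outerP (h l.succ)
    + v • (1 : Matrix (Fin M) (Fin M) ℂ)

/-- output SIR toward interference `j`: `q(d₀, Γ) / q(d_j, Γ)`. -/
def SIRj {M N : ℕ} (d : Fin (N + 1) → Fin M → ℂ) (j : Fin N)
    (A : Matrix (Fin M) (Fin M) ℂ) : ℝ :=
  quadForm (d 0) A / quadForm (d j.succ) A

/-- the Riemannian interference coefficients
`c_l^R(v) = ((σ_l²‖h_l‖² + v)^{τ_l} v^{1-τ_l} - v)/‖h_l‖²`. -/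
def cRcoef {M N : ℕ} (h : Fin (N + 1) → Fin M → ℂ) (σsq τ : Fin N → ℝ) (v : ℝ)
    (l : Fin N) : ℝ :=
  ((σsq l * nsq (h l.succ) + v) ^ (τ l) * v ^ (1 - τ l) - v) / nsq (h l.succ)

/-- total output SIR: `q(d₀, Γ) / ∑ j, q(d_j, Γ)`. -/
def SIRtot {M N : ℕ} (d : Fin (N + 1) → Fin M → ℂ) (A : Matrix (Fin M) (Fin M) ℂ) : ℝ :=
  quadForm (d 0) A / ∑ j : Fin N, quadForm (d j.succ) A


lemma nsq_pos {M : ℕ} {x : Fin M → ℂ} (hx : x ≠ 0) : 0 < nsq x := by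
  have hex : ∃ i, x i ≠ 0 := by
    by_contra hc; push_neg at hc; exact hx (funext hc)
  obtain ⟨i, hi⟩ := hex
  exact lt_of_lt_of_le (Complex.normSq_pos.2 hi)
    (Finset.single_le_sum (fun j _ => Complex.normSq_nonneg _) (Finset.mem_univ i))

lemma dot_vecMulVec {M : ℕ} (x y z : Fin M → ℂ) :
    star x ⬝ᵥ (Matrix.vecMulVec y z *ᵥ x) = (star x ⬝ᵥ y) * (z ⬝ᵥ x) := by
  simp only [Matrix.vecMulVec, Matrix.mulVec, dotProduct, Matrix.of_apply,
    Finset.mul_sum, Finset.sum_mul]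
  rw [Finset.sum_comm]
  refine Finset.sum_congr rfl fun j _ => Finset.sum_congr rfl fun i _ => by ring

lemma quadForm_outerP {M : ℕ} (x y : Fin M → ℂ) :
    quadForm x (outerP y) = ‖star x ⬝ᵥ y‖ ^ 2 := by
  rw [quadForm, outerP, dot_vecMulVec]
  have : star y ⬝ᵥ x = starRingEnd ℂ (star x ⬝ᵥ y) := by
    simp [dotProduct, map_sum, mul_comm]
  rw [this, Complex.mul_conj]
  rw [Complex.ofReal_re, Complex.normSq_eq_norm_sq]

lemma quadForm_add {M : ℕ} (x : Fin M → ℂ) (A B : Matrix (Fin M) (Fin M) ℂ) :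
    quadForm x (A + B) = quadForm x A + quadForm x B := by
  simp [quadForm, Matrix.add_mulVec, dotProduct_add]

lemma quadForm_smul {M : ℕ} (x : Fin M → ℂ) (r : ℝ) (A : Matrix (Fin M) (Fin M) ℂ) :
    quadForm x (r • A) = r * quadForm x A := by
  rw [quadForm, Matrix.smul_mulVec, dotProduct_smul]
  simp [quadForm, Complex.real_smul]

lemma quadForm_sum {M N : ℕ} (x : Fin M → ℂ) (f : Fin N → Matrix (Fin M) (Fin M) ℂ) :
    quadForm x (∑ l, f l) = ∑ l, quadForm x (f l) := by
  have h1 : (∑ l, f l) *ᵥ x = ∑ l, f l *ᵥ x := by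
    funext i
    simp only [Matrix.mulVec, dotProduct, Finset.sum_apply, Matrix.sum_apply,
      Finset.sum_mul]
    rw [Finset.sum_comm]
  rw [quadForm, h1]
  have h2 : star x ⬝ᵥ (∑ l, f l *ᵥ x) = ∑ l, star x ⬝ᵥ (f l *ᵥ x) := by
    simp only [dotProduct, Finset.sum_apply, Finset.mul_sum]
    rw [Finset.sum_comm]
  rw [h2, Complex.re_sum]
  rfl

lemma quadForm_smul_one {M : ℕ} (x : Fin M → ℂ) (v : ℝ) :
    quadForm x (v • (1 : Matrix (Fin M) (Fin M) ℂ)) = v * nsq x := by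
  rw [quadForm, Matrix.smul_mulVec, Matrix.one_mulVec, dotProduct_smul]
  simp only [Complex.real_smul]
  rw [Complex.re_ofReal_mul]
  congr 1
  simp only [dotProduct, Pi.star_apply, Complex.re_sum, nsq]
  refine Finset.sum_congr rfl fun i _ => ?_
  rw [Complex.star_def, ← Complex.normSq_eq_conj_mul_self]
  simp

lemma quadForm_Gam {M N : ℕ} (h : Fin (N+1) → Fin M → ℂ) (σ0sq : ℝ) (c : Fin N → ℝ) (v : ℝ)
    (x : Fin M → ℂ) :
    quadForm x (Gam h σ0sq c v)
      = σ0sq * ‖star x ⬝ᵥ h 0‖^2 + (∑ l : Fin N, c l * ‖star x ⬝ᵥ h l.succ‖^2) + v * nsq x := by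
  rw [Gam, quadForm_add, quadForm_add, quadForm_smul, quadForm_outerP, quadForm_sum,
    quadForm_smul_one]
  simp_rw [quadForm_smul, quadForm_outerP]

lemma SIRtot_Gam_eq {M N : ℕ} (hM : 0 < M)
    (h : Fin (N+1) → Fin M → ℂ) (d : Fin (N+1) → Fin M → ℂ)
    (κ ρ σ0sq v : ℝ) (c : Fin N → ℝ)
    (hd : ∀ r, nsq (d r) = M)
    (hdr : ∀ r, ‖star (d r) ⬝ᵥ h r‖ ^ 2 = κ * M * nsq (h r))
    (hds : ∀ r s, r ≠ s → ‖star (d r) ⬝ᵥ h s‖ ^ 2 = ρ * M * nsq (h s)) :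
    SIRtot d (Gam h σ0sq c v) =
      (κ * (σ0sq * nsq (h 0)) + ρ * (∑ l, c l * nsq (h l.succ)) + v)
        / ((N:ℝ) * ρ * (σ0sq * nsq (h 0))
            + (κ + ((N:ℝ)-1)*ρ) * (∑ l, c l * nsq (h l.succ)) + (N:ℝ) * v) := by
  have hnum : quadForm (d 0) (Gam h σ0sq c v)
      = (M:ℝ) * (κ * (σ0sq * nsq (h 0)) + ρ * (∑ l, c l * nsq (h l.succ)) + v) := by
    rw [quadForm_Gam, hdr 0, hd 0]
    have e : ∀ l : Fin N, c l * ‖star (d 0) ⬝ᵥ h l.succ‖^2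
        = (M:ℝ) * (ρ * (c l * nsq (h l.succ))) := fun l => by
      rw [hds 0 l.succ (Fin.succ_ne_zero l).symm]; ring
    rw [Finset.sum_congr rfl (fun l _ => e l), ← Finset.mul_sum, ← Finset.mul_sum]
    ring
  have hden : ∀ j : Fin N, quadForm (d j.succ) (Gam h σ0sq c v)
      = (M:ℝ) * (ρ * (σ0sq * nsq (h 0)) + ρ * (∑ l, c l * nsq (h l.succ))
          + (κ - ρ) * (c j * nsq (h j.succ)) + v) := by
    intro j
    rw [quadForm_Gam, hds j.succ 0 (Fin.succ_ne_zero j), hd]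
    have e : ∀ l : Fin N, c l * ‖star (d j.succ) ⬝ᵥ h l.succ‖^2
        = ρ * (M:ℝ) * (c l * nsq (h l.succ))
          + (if l = j then (κ - ρ) * (M:ℝ) * (c l * nsq (h l.succ)) else 0) := by
      intro l
      by_cases hl : l = j
      · subst hl; rw [hdr l.succ, if_pos rfl]; ring
      · rw [hds j.succ l.succ (by simpa [Fin.succ_inj] using Ne.symm hl), if_neg hl]; ring
    rw [Finset.sum_congr rfl (fun l _ => e l), Finset.sum_add_distrib, ← Finset.mul_sum,
      Finset.sum_ite_eq' Finset.univ j, if_pos (Finset.mem_univ j)]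
    ring
  rw [SIRtot, hnum, Finset.sum_congr rfl (fun j _ => hden j)]
  have hsum : ∑ j : Fin N, ((M:ℝ) * (ρ * (σ0sq * nsq (h 0)) + ρ * (∑ l, c l * nsq (h l.succ))
          + (κ - ρ) * (c j * nsq (h j.succ)) + v))
      = (M:ℝ) * ((N:ℝ) * ρ * (σ0sq * nsq (h 0))
          + (κ + ((N:ℝ)-1)*ρ) * (∑ l, c l * nsq (h l.succ)) + (N:ℝ) * v) := by
    rw [← Finset.mul_sum]
    congr 1
    rw [Finset.sum_add_distrib, Finset.sum_add_distrib, Finset.sum_const, Finset.sum_const,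
      ← Finset.mul_sum, Finset.card_univ, Fintype.card_fin]
    ring
  rw [hsum, mul_div_mul_left _ _ (by positivity : (M:ℝ) ≠ 0)]

lemma pow_term_lower {s v τ : ℝ} (hs : 0 < s) (hv : 0 < v) (hτ0 : 0 < τ) :
    v ≤ (s + v) ^ τ * v ^ (1 - τ) := by
  have h1 : v = v ^ τ * v ^ (1 - τ) := by
    rw [← Real.rpow_add hv]; norm_num
  calc v = v ^ τ * v ^ (1 - τ) := h1
    _ ≤ (s + v) ^ τ * v ^ (1 - τ) := mul_le_mul_of_nonneg_right
        (Real.rpow_le_rpow hv.le (by linarith) hτ0.le) (Real.rpow_nonneg hv.le _)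

lemma pow_term_upper {s v τ : ℝ} (hs : 0 < s) (hv : 0 < v) (hτ0 : 0 < τ) (hτ1 : τ < 1) :
    (s + v) ^ τ * v ^ (1 - τ) < v + τ * s := by
  have hb : (1 + s / v) ^ τ < 1 + τ * (s / v) :=
    rpow_one_add_lt_one_add_mul_self (by nlinarith [div_pos hs hv]) (div_pos hs hv).ne' hτ0 hτ1
  have key : (s + v) ^ τ * v ^ (1 - τ) = v * (1 + s / v) ^ τ := by
    have h2 : (1 : ℝ) + s / v = (s + v) / v := by field_simp; ring
    rw [h2, Real.div_rpow (by positivity) hv.le, Real.rpow_sub hv, Real.rpow_one]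
    field_simp
  rw [key]
  calc v * (1 + s / v) ^ τ < v * (1 + τ * (s / v)) := (mul_lt_mul_iff_right₀ hv).2 hb
    _ = v + τ * s := by field_simp

lemma pow_term_hasDerivAt {s τ : ℝ} (v : ℝ) (hs : 0 < s) (hv : 0 < v) :
    HasDerivAt (fun w => (s + w) ^ τ * w ^ (1 - τ) - w)
      (τ * (s + v) ^ (τ - 1) * v ^ (1 - τ) + (1 - τ) * (s + v) ^ τ * v ^ (-τ) - 1) v := by
  have hx : (0:ℝ) < s + v := by linarith
  have h1 : HasDerivAt (fun w : ℝ => (s + w) ^ τ) (τ * (s + v) ^ (τ - 1)) v := by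
    have hb : HasDerivAt (fun w : ℝ => s + w) 1 v := (hasDerivAt_id v).const_add s
    have hr := Real.hasDerivAt_rpow_const (x := s + v) (p := τ) (Or.inl hx.ne')
    simpa [Function.comp_def] using hr.comp v hb
  have h2 : HasDerivAt (fun w : ℝ => w ^ (1 - τ)) ((1 - τ) * v ^ (-τ)) v := by
    have hr := Real.hasDerivAt_rpow_const (x := v) (p := 1 - τ) (Or.inl hv.ne')
    have e : (1:ℝ) - τ - 1 = -τ := by ring
    rwa [e] at hr
  have : HasDerivAt (fun w => (s + w) ^ τ * w ^ (1 - τ) - w)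
      (τ * (s + v) ^ (τ - 1) * v ^ (1 - τ) + (s + v) ^ τ * ((1 - τ) * v ^ (-τ)) - 1) v :=
    (h1.mul h2).sub (hasDerivAt_id v)
  convert this using 1
  ring

lemma pow_term_deriv_nonneg {s v τ : ℝ} (hs : 0 < s) (hv : 0 < v) (hτ0 : 0 < τ) (hτ1 : τ < 1) :
    0 ≤ τ * (s + v) ^ (τ - 1) * v ^ (1 - τ) + (1 - τ) * (s + v) ^ τ * v ^ (-τ) - 1 := by
  have hx : (0:ℝ) < s + v := by linarith
  set a := (s + v) ^ (τ - 1) * v ^ (1 - τ) with ha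
  set b := (s + v) ^ τ * v ^ (-τ) with hb
  have hgm : a ^ τ * b ^ (1 - τ) ≤ τ * a + (1 - τ) * b :=
    Real.geom_mean_le_arith_mean2_weighted hτ0.le (by linarith) (by positivity) (by positivity)
      (by ring)
  have hone : a ^ τ * b ^ (1 - τ) = 1 := by
    rw [ha, hb, Real.mul_rpow (by positivity) (by positivity),
      Real.mul_rpow (by positivity) (by positivity),
      ← Real.rpow_mul hx.le, ← Real.rpow_mul hv.le, ← Real.rpow_mul hx.le,
      ← Real.rpow_mul hv.le, mul_mul_mul_comm, ← Real.rpow_add hx, ← Real.rpow_add hv]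
    have e1 : (τ-1)*τ + τ*(1-τ) = 0 := by ring
    have e2 : (1-τ)*τ + (-τ)*(1-τ) = 0 := by ring
    rw [e1, e2, Real.rpow_zero, Real.rpow_zero, mul_one]
  rw [hone] at hgm
  nlinarith [hgm]

/-- If `σ₀²‖h₀‖² > (1/N) ∑ l, σ_l² τ_l ‖h_l‖²`, then the total output
SIRs `g_R(v) = SIR_tot(Γ_R(v))` and `g_E(v) = SIR_tot(Γ_E(v))` are differentiable on
`(0,∞)` and satisfy `g_R′(v) < g_E′(v) < 0` there. -/
theorem riemannian_total_SIR_derivative_lt_euclidean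
    (M N : ℕ) (hM : 1 ≤ M) (hN : 1 ≤ N)
    (h : Fin (N + 1) → Fin M → ℂ)
    (hnz : ∀ r, h r ≠ 0)
    (horth : ∀ r s, r ≠ s → star (h r) ⬝ᵥ h s = 0)
    (d : Fin (N + 1) → Fin M → ℂ)
    (κ ρ : ℝ) (hρ : 0 ≤ ρ) (hκρ : ρ < κ)
    (hd : ∀ r, nsq (d r) = M)
    (hdr : ∀ r, ‖star (d r) ⬝ᵥ h r‖ ^ 2 = κ * M * nsq (h r))
    (hds : ∀ r s, r ≠ s → ‖star (d r) ⬝ᵥ h s‖ ^ 2 = ρ * M * nsq (h s))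
    (σ0sq : ℝ) (hσ0 : 0 < σ0sq)
    (σsq : Fin N → ℝ) (hσ : ∀ l, 0 < σsq l)
    (τ : Fin N → ℝ) (hτ : ∀ l, τ l ∈ Set.Ioo (0 : ℝ) 1)
    (hdom : (N : ℝ)⁻¹ * ∑ l : Fin N, σsq l * τ l * nsq (h l.succ) < σ0sq * nsq (h 0))
    (gR gE : ℝ → ℝ)
    (hgR : gR = fun v => SIRtot d (Gam h σ0sq (cRcoef h σsq τ v) v))
    (hgE : gE = fun v => SIRtot d (Gam h σ0sq (fun l => σsq l * τ l) v)) :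
    ∀ v : ℝ, 0 < v →
      DifferentiableAt ℝ gR v ∧ DifferentiableAt ℝ gE v ∧
      deriv gR v < deriv gE v ∧ deriv gE v < 0 := by
  intro v hv
  have hH0 : 0 < nsq (h 0) := nsq_pos (hnz 0)
  have hκ : 0 < κ := lt_of_le_of_lt hρ hκρ
  have hN1 : (1:ℝ) ≤ (N:ℝ) := by exact_mod_cast hN
  set A := σ0sq * nsq (h 0) with hA_def
  have hA : 0 < A := mul_pos hσ0 hH0
  set K := κ + ((N:ℝ)-1)*ρ with hK_def
  have hK0 : 0 < K := by nlinarith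
  set SE := ∑ l : Fin N, σsq l * τ l * nsq (h l.succ) with hSE_def
  set s : Fin N → ℝ := fun l => σsq l * nsq (h l.succ) with hs_def
  have hspos : ∀ l, 0 < s l := fun l => mul_pos (hσ l) (nsq_pos (hnz l.succ))
  set F : ℝ → ℝ := fun w => ∑ l : Fin N, ((s l + w) ^ (τ l) * w ^ (1 - τ l) - w) with hF_def
  set F' : ℝ := ∑ l : Fin N, (τ l * (s l + v) ^ (τ l - 1) * v ^ (1 - τ l)
      + (1 - τ l) * (s l + v) ^ (τ l) * v ^ (-(τ l)) - 1) with hF'_def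
  have hFder : HasDerivAt F F' v := HasDerivAt.fun_sum fun l _ =>
    pow_term_hasDerivAt v (hspos l) hv
  clear_value A K SE s F F'
  have hM0 : 0 < M := hM
  -- value of SE bounds
  have hSE_NA : SE < (N:ℝ) * A := by
    have hNpos : (0:ℝ) < N := by linarith
    have := mul_lt_mul_of_pos_left hdom hNpos
    rw [← mul_assoc, mul_inv_cancel₀ hNpos.ne', one_mul] at this
    exact this
  have hFlt : F v < SE := by
    have hne : (Finset.univ : Finset (Fin N)).Nonempty := ⟨⟨0, hN⟩, Finset.mem_univ _⟩
    rw [hF_def, hSE_def]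
    refine Finset.sum_lt_sum_of_nonempty hne fun l _ => ?_
    have hub := pow_term_upper (hspos l) hv (hτ l).1 (hτ l).2
    have hsl : s l = σsq l * nsq (h l.succ) := by rw [hs_def]
    rw [hsl] at hub
    have he : τ l * (σsq l * nsq (h l.succ)) = σsq l * τ l * nsq (h l.succ) := by ring
    rw [hsl]
    linarith [hub, he.le, he.ge]
  have hF0 : 0 ≤ F v := by
    rw [hF_def]
    exact Finset.sum_nonneg fun l _ => sub_nonneg.2 (pow_term_lower (hspos l) hv (hτ l).1)
  have hF'0 : 0 ≤ F' := by
    rw [hF'_def]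
    exact Finset.sum_nonneg fun l _ =>
      pow_term_deriv_nonneg (hspos l) hv (hτ l).1 (hτ l).2
  -- formulas for gR and gE on (0, ∞)
  have hgRform : ∀ w : ℝ, 0 < w →
      gR w = (κ * A + ρ * F w + w) / ((N:ℝ) * ρ * A + K * F w + (N:ℝ) * w) := by
    intro w hw
    rw [hgR]
    show SIRtot d (Gam h σ0sq (cRcoef h σsq τ w) w) = _
    rw [SIRtot_Gam_eq hM0 h d κ ρ σ0sq w _ hd hdr hds]
    have hSsum : (∑ l : Fin N, cRcoef h σsq τ w l * nsq (h l.succ)) = F w := by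
      rw [hF_def]
      refine Finset.sum_congr rfl fun l _ => ?_
      rw [cRcoef, hs_def, div_mul_cancel₀ _ (ne_of_gt (nsq_pos (hnz l.succ)))]
    rw [hSsum, ← hA_def, ← hK_def]
  have hgEform : ∀ w : ℝ, 0 < w →
      gE w = (κ * A + ρ * SE + w) / ((N:ℝ) * ρ * A + K * SE + (N:ℝ) * w) := by
    intro w hw
    rw [hgE]
    show SIRtot d (Gam h σ0sq (fun l => σsq l * τ l) w) = _
    rw [SIRtot_Gam_eq hM0 h d κ ρ σ0sq w _ hd hdr hds]
    have hSsum : (∑ l : Fin N, (σsq l * τ l) * nsq (h l.succ)) = SE := by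
      rw [hSE_def]
    rw [hSsum, ← hA_def, ← hK_def]
  -- eventual equality near v
  have hevR : gR =ᶠ[𝓝 v] fun w => (κ * A + ρ * F w + w)
      / ((N:ℝ) * ρ * A + K * F w + (N:ℝ) * w) := by
    filter_upwards [eventually_gt_nhds hv] with w hw using hgRform w hw
  have hevE : gE =ᶠ[𝓝 v] fun w => (κ * A + ρ * SE + w)
      / ((N:ℝ) * ρ * A + K * SE + (N:ℝ) * w) := by
    filter_upwards [eventually_gt_nhds hv] with w hw using hgEform w hw
  -- denominators at v
  have hNv : 0 < (N:ℝ) * v := by nlinarith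
  have hSE0 : 0 ≤ SE := le_trans hF0 hFlt.le
  have hNρA : 0 ≤ (N:ℝ) * ρ * A := by
    have : (0:ℝ) ≤ (N:ℝ) := by linarith
    exact mul_nonneg (mul_nonneg this hρ) hA.le
  have hQEv : 0 < (N:ℝ) * ρ * A + K * SE + (N:ℝ) * v := by
    have := mul_nonneg hK0.le hSE0
    linarith
  have hQRv : 0 < (N:ℝ) * ρ * A + K * F v + (N:ℝ) * v := by
    have := mul_nonneg hK0.le hF0
    linarith
  -- derivatives
  have hPE : HasDerivAt (fun w => κ * A + ρ * SE + w) 1 v := by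
    simpa using (hasDerivAt_id v).const_add (κ * A + ρ * SE)
  have hQE : HasDerivAt (fun w => (N:ℝ) * ρ * A + K * SE + (N:ℝ) * w) (N:ℝ) v := by
    simpa using ((hasDerivAt_id v).const_mul (N:ℝ)).const_add ((N:ℝ) * ρ * A + K * SE)
  have hPR : HasDerivAt (fun w => κ * A + ρ * F w + w) (ρ * F' + 1) v := by
    exact ((hFder.const_mul ρ).const_add (κ * A)).add (hasDerivAt_id v)
  have hQR : HasDerivAt (fun w => (N:ℝ) * ρ * A + K * F w + (N:ℝ) * w) (K * F' + (N:ℝ)) v := by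
    have := ((hFder.const_mul K).const_add ((N:ℝ) * ρ * A)).add
      ((hasDerivAt_id v).const_mul (N:ℝ))
    simp only [mul_one] at this; exact this
  have hdE : HasDerivAt (fun w => (κ * A + ρ * SE + w)
      / ((N:ℝ) * ρ * A + K * SE + (N:ℝ) * w))
      ((1 * ((N:ℝ) * ρ * A + K * SE + (N:ℝ) * v)
        - (κ * A + ρ * SE + v) * (N:ℝ)) / ((N:ℝ) * ρ * A + K * SE + (N:ℝ) * v) ^ 2) v :=
    hPE.div hQE hQEv.ne'
  have hdR : HasDerivAt (fun w => (κ * A + ρ * F w + w)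
      / ((N:ℝ) * ρ * A + K * F w + (N:ℝ) * w))
      (((ρ * F' + 1) * ((N:ℝ) * ρ * A + K * F v + (N:ℝ) * v)
        - (κ * A + ρ * F v + v) * (K * F' + (N:ℝ)))
        / ((N:ℝ) * ρ * A + K * F v + (N:ℝ) * v) ^ 2) v :=
    hPR.div hQR hQRv.ne'
  have hdiffR : DifferentiableAt ℝ gR v :=
    hdR.differentiableAt.congr_of_eventuallyEq hevR
  have hdiffE : DifferentiableAt ℝ gE v :=
    hdE.differentiableAt.congr_of_eventuallyEq hevE
  have hderR : deriv gR v = ((ρ * F' + 1) * ((N:ℝ) * ρ * A + K * F v + (N:ℝ) * v)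
        - (κ * A + ρ * F v + v) * (K * F' + (N:ℝ)))
        / ((N:ℝ) * ρ * A + K * F v + (N:ℝ) * v) ^ 2 := by
    rw [hevR.deriv_eq]; exact hdR.deriv
  have hderE : deriv gE v = (1 * ((N:ℝ) * ρ * A + K * SE + (N:ℝ) * v)
        - (κ * A + ρ * SE + v) * (N:ℝ)) / ((N:ℝ) * ρ * A + K * SE + (N:ℝ) * v) ^ 2 := by
    rw [hevE.deriv_eq]; exact hdE.deriv
  refine ⟨hdiffR, hdiffE, ?_, ?_⟩
  · -- deriv gR v < deriv gE v
    rw [hderR, hderE]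
    set QR := (N:ℝ) * ρ * A + K * F v + (N:ℝ) * v with hQR_def
    set QE := (N:ℝ) * ρ * A + K * SE + (N:ℝ) * v with hQE_def
    have hQRle : QR ≤ QE := by
      rw [hQR_def, hQE_def]
      have : K * F v ≤ K * SE := mul_le_mul_of_nonneg_left hFlt.le hK0.le
      linarith
    set numR := (ρ * F' + 1) * QR - (κ * A + ρ * F v + v) * (K * F' + (N:ℝ)) with hnumR_def
    set numE := 1 * QE - (κ * A + ρ * SE + v) * (N:ℝ) with hnumE_def
    have hnumE_eq : numE = (κ - ρ) * (SE - (N:ℝ) * A) := by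
      rw [hnumE_def, hQE_def, hK_def]; ring
    have hnumR_eq : numR = (κ - ρ) * ((F v - (N:ℝ) * A)
        - F' * ((κ + (N:ℝ) * ρ) * A + v)) := by
      rw [hnumR_def, hQR_def, hK_def]; ring
    have hX : 0 < (κ + (N:ℝ) * ρ) * A + v := by
      have h0 : 0 < κ + (N:ℝ) * ρ :=
        add_pos_of_pos_of_nonneg hκ (mul_nonneg (by linarith) hρ)
      linarith [mul_pos h0 hA]
    have hnumE_neg : numE < 0 := by
      rw [hnumE_eq]
      exact mul_neg_of_pos_of_neg (sub_pos.2 hκρ) (by linarith)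
    have hnumR_lt : numR < numE := by
      rw [hnumR_eq, hnumE_eq]
      have h1 : 0 ≤ F' * ((κ + (N:ℝ) * ρ) * A + v) := mul_nonneg hF'0 hX.le
      have h2 : (F v - (N:ℝ) * A) - F' * ((κ + (N:ℝ) * ρ) * A + v) < SE - (N:ℝ) * A := by
        linarith
      exact mul_lt_mul_of_pos_left h2 (sub_pos.2 hκρ)
    have hnumR_neg : numR < 0 := hnumR_lt.trans hnumE_neg
    calc numR / QR ^ 2 ≤ numR / QE ^ 2 := by
          rw [div_le_div_iff₀ (pow_pos hQRv 2) (pow_pos hQEv 2)]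
          have h2 : QR ^ 2 ≤ QE ^ 2 := pow_le_pow_left₀ hQRv.le hQRle 2
          exact mul_le_mul_of_nonpos_left h2 hnumR_neg.le
      _ < numE / QE ^ 2 := by
          have := mul_lt_mul_of_pos_right hnumR_lt
            (by positivity : (0:ℝ) < (QE ^ 2)⁻¹)
          simpa [div_eq_mul_inv] using this
  · rw [hderE]
    set QE := (N:ℝ) * ρ * A + K * SE + (N:ℝ) * v with hQE_def
    have hnumE_eq : 1 * QE - (κ * A + ρ * SE + v) * (N:ℝ) = (κ - ρ) * (SE - (N:ℝ) * A) := by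
      rw [hQE_def, hK_def]; ring
    rw [hnumE_eq]
    apply div_neg_of_neg_of_pos
    · exact mul_neg_of_pos_of_neg (sub_pos.2 hκρ) (by linarith)
    · exact pow_pos hQEv 2
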